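/- arXiv:2210.17458 — 2 statements merged into one kernel-verified Lean document; each statement's English description precedes it below -/
import Mathlib

section
/- Let f ∈ L^∞(ℝ²) with supp f ⊂ Ω := B(0,R)∖B(0,R/K) for some K > 1. Then the radial and angular components of the Biot–Savart velocity satisfy |v_r[f](x) − v_r[f](y)| + |v_α[f](x) − v_α[f](y)| ≤ C·K·‖f‖_{L^∞}|x−y|(1 + log(R/|x−y|)) for all x, y ∈ Ω with |x−y| ≤ R. -/
open MeasureTheory
open scoped RealInnerProductSpace

/-- The rotation by 90 degrees: `(a,b)^⊥ = (-b,a)`. -/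
noncomputable def perp (x : EuclideanSpace ℝ (Fin 2)) : EuclideanSpace ℝ (Fin 2) :=
  (WithLp.equiv 2 (Fin 2 → ℝ)).symm ![-x 1, x 0]

/-- The 2D Biot–Savart velocity `v[ω](x) = ∫ (x−y)^⊥ ω(y)/|x−y|² dy`. -/
noncomputable def biotSavart (ω : EuclideanSpace ℝ (Fin 2) → ℝ)
    (x : EuclideanSpace ℝ (Fin 2)) : EuclideanSpace ℝ (Fin 2) :=
  ∫ y, (ω y / ‖x - y‖ ^ 2) • perp (x - y)

/-- The radial component `v_r[ω](x) = x̂ · v[ω](x)`. -/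
noncomputable def vrad (ω : EuclideanSpace ℝ (Fin 2) → ℝ)
    (x : EuclideanSpace ℝ (Fin 2)) : ℝ :=
  ⟪‖x‖⁻¹ • x, biotSavart ω x⟫

/-- The angular component `v_α[ω](x) = x̂^⊥ · v[ω](x)`. -/
noncomputable def vang (ω : EuclideanSpace ℝ (Fin 2) → ℝ)
    (x : EuclideanSpace ℝ (Fin 2)) : ℝ :=
  ⟪‖x‖⁻¹ • perp x, biotSavart ω x⟫

open Set Metric
open scoped ENNReal

local notation "E2" => EuclideanSpace ℝ (Fin 2)

lemma perp_apply_zero (x : E2) : perp x 0 = -x 1 := rfl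
lemma perp_apply_one (x : E2) : perp x 1 = x 0 := rfl

lemma norm_perp (x : E2) : ‖perp x‖ = ‖x‖ := by
  simp [EuclideanSpace.norm_eq, Fin.sum_univ_two, perp_apply_zero, perp_apply_one]
  ring_nf

lemma perp_sub (u v : E2) : perp (u - v) = perp u - perp v := by
  ext i
  fin_cases i <;>
    simp [perp_apply_zero, perp_apply_one, PiLp.sub_apply] <;> ring

lemma perp_smul (c : ℝ) (u : E2) : perp (c • u) = c • perp u := by
  ext i
  fin_cases i <;>
    simp [perp_apply_zero, perp_apply_one, PiLp.smul_apply, smul_eq_mul] <;> ring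

lemma continuous_perp : Continuous perp := by
  have : perp = fun x : E2 => (EuclideanSpace.equiv (Fin 2) ℝ).symm ![-x 1, x 0] := rfl
  rw [this]
  refine (EuclideanSpace.equiv (Fin 2) ℝ).symm.continuous.comp (continuous_pi fun i => ?_)
  fin_cases i
  · exact ((continuous_apply (1 : Fin 2)).comp
      (PiLp.continuous_ofLp 2 _)).neg
  · exact (continuous_apply (0 : Fin 2)).comp (PiLp.continuous_ofLp 2 _)

noncomputable abbrev sphMeas : ℝ≥0∞ :=
  (volume : Measure E2).toSphere Set.univ

lemma sphMeas_ne_top : sphMeas ≠ ⊤ := measure_ne_top _ _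

lemma lintegral_radial (f : ℝ → ℝ≥0∞) (hf : Measurable f) :
    ∫⁻ z : E2, f ‖z‖ = sphMeas * ∫⁻ t in Ioi (0:ℝ), ENNReal.ofReal t * f t := by
  have hdim : Module.finrank ℝ E2 = 2 := finrank_euclideanSpace_fin
  have h1 : ∫⁻ z : ({0}ᶜ : Set E2), f ‖z.1‖ ∂((volume : Measure E2).comap (↑))
      = ∫⁻ z : E2, f ‖z‖ := by
    rw [lintegral_subtype_comap (measurableSet_singleton (0:E2)).compl (fun z => f ‖z‖),
      MeasureTheory.restrict_compl_singleton]
  have h2 := (Measure.measurePreserving_homeomorphUnitSphereProd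
      (volume : Measure E2)).lintegral_comp
      (f := fun p : sphere (0 : E2) 1 × Ioi (0:ℝ) => f p.2.1)
      (hf.comp (measurable_subtype_coe.comp measurable_snd))
  have h3 : ∫⁻ z : ({0}ᶜ : Set E2), f ‖z.1‖ ∂((volume : Measure E2).comap (↑))
      = ∫⁻ a : ({0}ᶜ : Set E2), (fun p : sphere (0 : E2) 1 × Ioi (0:ℝ) => f p.2.1)
          ((homeomorphUnitSphereProd E2) a) ∂((volume : Measure E2).comap (↑)) :=
    lintegral_congr fun z => by simp
  rw [← h1, h3, h2]
  rw [lintegral_prod (fun p : sphere (0 : E2) 1 × Ioi (0:ℝ) => f p.2.1)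
    ((hf.comp (measurable_subtype_coe.comp measurable_snd)).aemeasurable)]
  show ∫⁻ _x : sphere (0:E2) 1, (∫⁻ y : Ioi (0:ℝ),
      f y.1 ∂ Measure.volumeIoiPow (Module.finrank ℝ E2 - 1)) ∂(volume : Measure E2).toSphere
    = _
  rw [lintegral_const, mul_comm]
  congr 1
  rw [hdim]
  show ∫⁻ y : Ioi (0:ℝ), f y.1
      ∂(Measure.comap Subtype.val volume).withDensity (fun r : Ioi (0:ℝ) => ENNReal.ofReal (r.1 ^ (1:ℕ)))
    = _
  rw [lintegral_withDensity_eq_lintegral_mul _ (by fun_prop)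
    (g := fun y : Ioi (0:ℝ) => f y.1) (hf.comp measurable_subtype_coe)]
  simp only [Pi.mul_apply]
  rw [lintegral_subtype_comap measurableSet_Ioi
    (fun t : ℝ => ENNReal.ofReal (t ^ (1:ℕ)) * f t)]
  simp [pow_one]

lemma lintegral_radial_sub (c : E2) (f : ℝ → ℝ≥0∞) (hf : Measurable f) :
    ∫⁻ z : E2, f ‖z - c‖ = sphMeas * ∫⁻ t in Ioi (0:ℝ), ENNReal.ofReal t * f t := by
  rw [← lintegral_radial f hf]
  exact (measurePreserving_sub_right volume c).lintegral_comp (hf.comp measurable_norm)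

lemma lintegral_near (c : E2) (r : ℝ) :
    ∫⁻ z : E2, ({z : E2 | ‖z - c‖ < r}).indicator
      (fun z => ENNReal.ofReal ‖z - c‖⁻¹) z ≤ sphMeas * ENNReal.ofReal r := by
  set g : ℝ → ℝ≥0∞ := (Iio r).indicator (fun t => ENNReal.ofReal t⁻¹) with hgdef
  have hg : Measurable g :=
    (ENNReal.measurable_ofReal.comp measurable_inv).indicator measurableSet_Iio
  have h1 : ∀ z : E2, ({z : E2 | ‖z - c‖ < r}).indicator
      (fun z => ENNReal.ofReal ‖z - c‖⁻¹) z = g ‖z - c‖ := by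
    intro z
    by_cases h : ‖z - c‖ < r <;> simp [hgdef, h]
  rw [lintegral_congr h1, lintegral_radial_sub c g hg]
  refine mul_le_mul_right ?_ _
  have h2 : ∀ t ∈ Ioi (0:ℝ), ENNReal.ofReal t * g t = (Iio r).indicator (fun _ => 1) t := by
    intro t ht
    simp only [hgdef]
    by_cases h : t ∈ Iio r
    · rw [Set.indicator_of_mem h, Set.indicator_of_mem h,
        ← ENNReal.ofReal_mul (le_of_lt ht), mul_inv_cancel₀ (ne_of_gt ht), ENNReal.ofReal_one]
    · rw [Set.indicator_of_notMem h, Set.indicator_of_notMem h, mul_zero]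
  rw [setLIntegral_congr_fun measurableSet_Ioi h2]
  rw [lintegral_indicator measurableSet_Iio, Measure.restrict_restrict measurableSet_Iio]
  simp only [lintegral_const, Measure.restrict_apply MeasurableSet.univ, univ_inter]
  rw [Set.Iio_inter_Ioi, one_mul, Real.volume_Ioo]
  exact ENNReal.ofReal_le_ofReal (by linarith [le_max_left r 0])

lemma lintegral_far (c : E2) (a b : ℝ) (ha : 0 < a) (hab : a ≤ b) :
    ∫⁻ z : E2, ({z : E2 | a ≤ ‖z - c‖ ∧ ‖z - c‖ ≤ b}).indicator
      (fun z => ENNReal.ofReal (‖z - c‖⁻¹ ^ 2)) z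
    ≤ sphMeas * ENNReal.ofReal (Real.log (b / a)) := by
  set g : ℝ → ℝ≥0∞ := (Icc a b).indicator (fun t => ENNReal.ofReal (t⁻¹ ^ 2)) with hgdef
  have hg : Measurable g :=
    (ENNReal.measurable_ofReal.comp (measurable_inv.pow_const 2)).indicator measurableSet_Icc
  have h1 : ∀ z : E2, ({z : E2 | a ≤ ‖z - c‖ ∧ ‖z - c‖ ≤ b}).indicator
      (fun z => ENNReal.ofReal (‖z - c‖⁻¹ ^ 2)) z = g ‖z - c‖ := by
    intro z
    simp only [hgdef]
    by_cases h : a ≤ ‖z - c‖ ∧ ‖z - c‖ ≤ b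
    · rw [Set.indicator_of_mem (by exact h), Set.indicator_of_mem (Set.mem_Icc.2 h)]
    · rw [Set.indicator_of_notMem (by exact h),
        Set.indicator_of_notMem (fun hm => h (Set.mem_Icc.1 hm))]
  rw [lintegral_congr h1, lintegral_radial_sub c g hg]
  refine mul_le_mul_right ?_ _
  have h2 : ∀ t ∈ Ioi (0:ℝ), ENNReal.ofReal t * g t
      = (Icc a b).indicator (fun t => ENNReal.ofReal t⁻¹) t := by
    intro t ht
    simp only [hgdef]
    by_cases h : t ∈ Icc a b
    · rw [Set.indicator_of_mem h, Set.indicator_of_mem h,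
        ← ENNReal.ofReal_mul (le_of_lt ht)]
      congr 1
      rw [sq, ← mul_assoc, mul_inv_cancel₀ (ne_of_gt ht), one_mul]
    · rw [Set.indicator_of_notMem h, Set.indicator_of_notMem h, mul_zero]
  rw [setLIntegral_congr_fun measurableSet_Ioi h2]
  rw [lintegral_indicator measurableSet_Icc, Measure.restrict_restrict measurableSet_Icc]
  have hsub : Icc a b ∩ Ioi 0 = Icc a b := by
    refine inter_eq_self_of_subset_left fun t ht => lt_of_lt_of_le ha ht.1
  rw [hsub]
  have hcont : ContinuousOn (fun t : ℝ => t⁻¹) (Icc a b) :=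
    continuousOn_inv₀.mono (fun t ht => ne_of_gt (lt_of_lt_of_le ha ht.1))
  have hint : IntegrableOn (fun t : ℝ => t⁻¹) (Icc a b) := hcont.integrableOn_Icc
  have hnn : 0 ≤ᵐ[volume.restrict (Icc a b)] (fun t : ℝ => t⁻¹) :=
    (ae_restrict_iff' measurableSet_Icc).2 (Filter.Eventually.of_forall fun t ht =>
      inv_nonneg.2 (le_of_lt (lt_of_lt_of_le ha ht.1)))
  rw [← ofReal_integral_eq_lintegral_ofReal hint hnn]
  refine ENNReal.ofReal_le_ofReal (le_of_eq ?_)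
  rw [MeasureTheory.integral_Icc_eq_integral_Ioc, ← intervalIntegral.integral_of_le hab,
    integral_inv_of_pos ha (lt_of_lt_of_le ha hab)]

lemma norm_smul_inv_sq_perp (c : ℝ) (u : E2) : ‖(c / ‖u‖ ^ 2) • perp u‖ = |c| / ‖u‖ := by
  rw [norm_smul, norm_perp, Real.norm_eq_abs, abs_div, abs_pow, abs_norm]
  rcases eq_or_ne ‖u‖ 0 with h | h
  · simp [h]
  · field_simp

lemma kernel_diff (u w : E2) (h : 2 * ‖u - w‖ ≤ ‖u‖) :
    ‖(‖u‖ ^ 2)⁻¹ • perp u - (‖w‖ ^ 2)⁻¹ • perp w‖ ≤ 4 * ‖u - w‖ / ‖u‖ ^ 2 := by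
  rcases eq_or_ne u w with rfl | hne
  · simp
  · have hd : 0 < ‖u - w‖ := norm_pos_iff.2 (sub_ne_zero.2 hne)
    have hu : 0 < ‖u‖ := lt_of_lt_of_le (by linarith) h
    have hwlb : ‖u‖ - ‖u - w‖ ≤ ‖w‖ := by
      have h1 := norm_sub_norm_le u w
      have h2 : ‖u - w‖ = ‖u - w‖ := rfl
      linarith [norm_sub_norm_le u w]
    have hw : 0 < ‖w‖ := by linarith
    have hu2w : ‖u‖ ≤ 2 * ‖w‖ := by linarith
    have hdec : (‖u‖ ^ 2)⁻¹ • perp u - (‖w‖ ^ 2)⁻¹ • perp w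
        = (‖u‖ ^ 2)⁻¹ • perp (u - w) + ((‖u‖ ^ 2)⁻¹ - (‖w‖ ^ 2)⁻¹) • perp w := by
      rw [perp_sub, smul_sub, sub_smul]
      abel
    rw [hdec]
    refine (norm_add_le _ _).trans ?_
    rw [norm_smul, norm_smul, norm_perp, norm_perp, Real.norm_eq_abs, Real.norm_eq_abs,
      abs_of_nonneg (by positivity : (0:ℝ) ≤ (‖u‖ ^ 2)⁻¹)]
    have key : |(‖u‖ ^ 2)⁻¹ - (‖w‖ ^ 2)⁻¹| * ‖w‖ ≤ 3 * ‖u - w‖ / ‖u‖ ^ 2 := by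
      rw [inv_sub_inv (by positivity) (by positivity), abs_div, abs_of_nonneg
        (by positivity : (0:ℝ) ≤ ‖u‖ ^ 2 * ‖w‖ ^ 2)]
      have h5 : |‖w‖ ^ 2 - ‖u‖ ^ 2| ≤ ‖u - w‖ * (‖u‖ + ‖w‖) := by
        have e : ‖w‖ ^ 2 - ‖u‖ ^ 2 = (‖w‖ - ‖u‖) * (‖w‖ + ‖u‖) := by ring
        rw [e, abs_mul, abs_of_nonneg (by positivity : (0:ℝ) ≤ ‖w‖ + ‖u‖)]
        have := abs_norm_sub_norm_le w u
        rw [norm_sub_rev w u] at this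
        nlinarith
      rw [div_mul_eq_mul_div, div_le_div_iff₀ (by positivity) (by positivity)]
      nlinarith [mul_le_mul_of_nonneg_right h5 (by positivity : (0:ℝ) ≤ ‖w‖ * ‖u‖ ^ 2),
        mul_nonneg (mul_nonneg (mul_nonneg hd.le (sq_nonneg ‖u‖)) hw.le)
          (by linarith : (0:ℝ) ≤ 2 * ‖w‖ - ‖u‖)]
    calc (‖u‖ ^ 2)⁻¹ * ‖u - w‖ + |(‖u‖ ^ 2)⁻¹ - (‖w‖ ^ 2)⁻¹| * ‖w‖
        ≤ (‖u‖ ^ 2)⁻¹ * ‖u - w‖ + 3 * ‖u - w‖ / ‖u‖ ^ 2 := by linarith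
      _ = 4 * ‖u - w‖ / ‖u‖ ^ 2 := by field_simp; ring

noncomputable def bsInt (f : E2 → ℝ) (x z : E2) : E2 := (f z / ‖x - z‖ ^ 2) • perp (x - z)

lemma biotSavart_eq_int (f : E2 → ℝ) (x : E2) : biotSavart f x = ∫ z, bsInt f x z := rfl

lemma norm_bsInt (f : E2 → ℝ) (x z : E2) : ‖bsInt f x z‖ = |f z| / ‖x - z‖ :=
  norm_smul_inv_sq_perp _ _

lemma bsInt_aesm (f : E2 → ℝ) (hf : AEStronglyMeasurable f volume) (x : E2) :
    AEStronglyMeasurable (bsInt f x) volume := by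
  have hm : Measurable fun z : E2 => (‖x - z‖ ^ 2)⁻¹ :=
    (((continuous_const.sub continuous_id).norm.pow 2).measurable).inv
  have : bsInt f x = fun z => (f z * (‖x - z‖ ^ 2)⁻¹) • perp (x - z) := by
    funext z; simp [bsInt, div_eq_mul_inv]
  rw [this]
  apply AEStronglyMeasurable.smul (f := fun z => f z * (‖x - z‖ ^ 2)⁻¹) (g := fun z => perp (x - z))
  · exact hf.mul hm.aestronglyMeasurable
  · exact Continuous.aestronglyMeasurable (continuous_perp.comp (continuous_const.sub continuous_id))

lemma bsInt_single_bound (f : E2 → ℝ) (R M : ℝ) (hM0 : 0 ≤ M)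
    (hsupp : ∀ z, f z ≠ 0 → ‖z‖ < R) (hM : ∀ z, |f z| ≤ M)
    (x : E2) (hx : ‖x‖ < R) (z : E2) :
    ENNReal.ofReal ‖bsInt f x z‖ ≤ ENNReal.ofReal M *
      ({z : E2 | ‖z - x‖ < 2 * R}).indicator (fun z => ENNReal.ofReal ‖z - x‖⁻¹) z := by
  by_cases hfz : f z = 0
  · simp [bsInt, hfz]
  · have hz : ‖z‖ < R := hsupp z hfz
    have hzx : ‖z - x‖ < 2 * R := by
      calc ‖z - x‖ ≤ ‖z‖ + ‖x‖ := norm_sub_le z x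
        _ < 2 * R := by linarith
    rw [Set.indicator_of_mem (by exact hzx), ← ENNReal.ofReal_mul hM0]
    refine ENNReal.ofReal_le_ofReal ?_
    rw [norm_bsInt, div_eq_mul_inv, norm_sub_rev x z]
    exact mul_le_mul_of_nonneg_right (hM z) (inv_nonneg.2 (norm_nonneg _))

lemma bsInt_integrable (f : E2 → ℝ) (hf : AEStronglyMeasurable f volume) (R M : ℝ)
    (hM0 : 0 ≤ M) (hsupp : ∀ z, f z ≠ 0 → ‖z‖ < R) (hM : ∀ z, |f z| ≤ M)
    (x : E2) (hx : ‖x‖ < R) : Integrable (bsInt f x) volume := by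
  refine ⟨bsInt_aesm f hf x, ?_⟩
  rw [hasFiniteIntegral_iff_norm]
  calc ∫⁻ z, ENNReal.ofReal ‖bsInt f x z‖
      ≤ ∫⁻ z, ENNReal.ofReal M *
        ({z : E2 | ‖z - x‖ < 2 * R}).indicator (fun z => ENNReal.ofReal ‖z - x‖⁻¹) z :=
        lintegral_mono (bsInt_single_bound f R M hM0 hsupp hM x hx)
    _ = ENNReal.ofReal M * ∫⁻ z, ({z : E2 | ‖z - x‖ < 2 * R}).indicator
          (fun z => ENNReal.ofReal ‖z - x‖⁻¹) z := lintegral_const_mul' _ _ ENNReal.ofReal_ne_top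
    _ ≤ ENNReal.ofReal M * (sphMeas * ENNReal.ofReal (2 * R)) :=
        mul_le_mul_right (lintegral_near x (2 * R)) _
    _ < ⊤ := by
        refine ENNReal.mul_lt_top ENNReal.ofReal_lt_top (ENNReal.mul_lt_top ?_ ENNReal.ofReal_lt_top)
        exact lt_of_le_of_ne le_top sphMeas_ne_top

lemma biotSavart_norm_le (f : E2 → ℝ) (hf : AEStronglyMeasurable f volume) (R M : ℝ)
    (hM0 : 0 ≤ M) (hsupp : ∀ z, f z ≠ 0 → ‖z‖ < R) (hM : ∀ z, |f z| ≤ M)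
    (x : E2) (hx : ‖x‖ < R) (hR : 0 ≤ R) :
    ‖biotSavart f x‖ ≤ M * sphMeas.toReal * (2 * R) := by
  rw [biotSavart_eq_int]
  refine (norm_integral_le_lintegral_norm _).trans ?_
  have hb : ∫⁻ z, ENNReal.ofReal ‖bsInt f x z‖
      ≤ ENNReal.ofReal (M * sphMeas.toReal * (2 * R)) := by
    calc ∫⁻ z, ENNReal.ofReal ‖bsInt f x z‖
        ≤ ENNReal.ofReal M * (sphMeas * ENNReal.ofReal (2 * R)) := by
          refine le_trans (lintegral_mono (bsInt_single_bound f R M hM0 hsupp hM x hx)) ?_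
          rw [lintegral_const_mul' _ _ ENNReal.ofReal_ne_top]
          exact mul_le_mul_right (lintegral_near x (2 * R)) _
      _ = ENNReal.ofReal (M * sphMeas.toReal * (2 * R)) := by
          rw [ENNReal.ofReal_mul (mul_nonneg hM0 ENNReal.toReal_nonneg),
            ENNReal.ofReal_mul hM0, ENNReal.ofReal_toReal sphMeas_ne_top, mul_assoc]
  exact ENNReal.toReal_le_of_le_ofReal (by positivity) hb

lemma bsInt_diff_bound (f : E2 → ℝ) (R M : ℝ) (hM0 : 0 ≤ M)
    (hsupp : ∀ z, f z ≠ 0 → ‖z‖ < R) (hM : ∀ z, |f z| ≤ M)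
    (x y : E2) (hx : ‖x‖ < R) (z : E2) :
    ENNReal.ofReal ‖bsInt f x z - bsInt f y z‖
      ≤ ENNReal.ofReal M *
        (({z : E2 | ‖z - x‖ < 2 * ‖x - y‖}).indicator (fun z => ENNReal.ofReal ‖z - x‖⁻¹) z
        + ({z : E2 | ‖z - y‖ < 3 * ‖x - y‖}).indicator (fun z => ENNReal.ofReal ‖z - y‖⁻¹) z
        + ENNReal.ofReal (8 * ‖x - y‖) *
          ({z : E2 | 2 * ‖x - y‖ ≤ ‖z - x‖ ∧ ‖z - x‖ ≤ 2 * R}).indicator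
            (fun z => ENNReal.ofReal (‖z - x‖⁻¹ ^ 2)) z) := by
  set d := ‖x - y‖ with hd
  by_cases hfz : f z = 0
  · simp [bsInt, hfz]
  · have hz : ‖z‖ < R := hsupp z hfz
    rw [mul_add, mul_add]
    by_cases hnear : ‖z - x‖ < 2 * d
    · -- near case
      have hzy : ‖z - y‖ < 3 * d := by
        calc ‖z - y‖ ≤ ‖z - x‖ + ‖x - y‖ := norm_sub_le_norm_sub_add_norm_sub z x y
          _ < 3 * d := by rw [← hd]; linarith
      have h1 : ENNReal.ofReal ‖bsInt f x z - bsInt f y z‖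
          ≤ ENNReal.ofReal (M * ‖z - x‖⁻¹) + ENNReal.ofReal (M * ‖z - y‖⁻¹) := by
        rw [← ENNReal.ofReal_add (by positivity) (by positivity)]
        refine ENNReal.ofReal_le_ofReal ?_
        refine (norm_sub_le _ _).trans ?_
        rw [norm_bsInt, norm_bsInt, norm_sub_rev x z, norm_sub_rev y z,
          div_eq_mul_inv, div_eq_mul_inv]
        gcongr <;> exact hM z
      refine h1.trans ?_
      refine le_trans (add_le_add ?_ ?_) le_self_add
      · rw [Set.indicator_of_mem (by exact hnear), ← ENNReal.ofReal_mul hM0]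
      · rw [Set.indicator_of_mem (by exact hzy), ← ENNReal.ofReal_mul hM0]
    · -- far case
      push_neg at hnear
      have hfar2 : ‖z - x‖ ≤ 2 * R := by
        calc ‖z - x‖ ≤ ‖z‖ + ‖x‖ := norm_sub_le z x
          _ ≤ 2 * R := by linarith
      have hker : ‖bsInt f x z - bsInt f y z‖ ≤ M * (8 * d * ‖z - x‖⁻¹ ^ 2) := by
        have hdiff : bsInt f x z - bsInt f y z
            = f z • ((‖x - z‖ ^ 2)⁻¹ • perp (x - z) - (‖y - z‖ ^ 2)⁻¹ • perp (y - z)) := by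
          rw [smul_sub, bsInt, bsInt, div_eq_mul_inv, div_eq_mul_inv, mul_smul, mul_smul]
        have huw : 2 * ‖(x - z) - (y - z)‖ ≤ ‖x - z‖ := by
          have e : (x - z) - (y - z) = x - y := by abel
          rw [e, ← hd, norm_sub_rev x z]
          exact hnear
        have hk := kernel_diff (x - z) (y - z) huw
        have e : (x - z) - (y - z) = x - y := by abel
        rw [e, ← hd] at hk
        rw [hdiff, norm_smul, Real.norm_eq_abs]
        calc |f z| * ‖(‖x - z‖ ^ 2)⁻¹ • perp (x - z) - (‖y - z‖ ^ 2)⁻¹ • perp (y - z)‖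
            ≤ M * (4 * d / ‖x - z‖ ^ 2) := by
              exact mul_le_mul (hM z) hk (norm_nonneg _) hM0
          _ ≤ M * (8 * d * ‖z - x‖⁻¹ ^ 2) := by
              rw [norm_sub_rev z x, inv_pow, ← div_eq_mul_inv]
              have hd0 : (0:ℝ) ≤ d := norm_nonneg _
              gcongr
              linarith
      have hind : ({z : E2 | 2 * d ≤ ‖z - x‖ ∧ ‖z - x‖ ≤ 2 * R}).indicator
          (fun z => ENNReal.ofReal (‖z - x‖⁻¹ ^ 2)) z = ENNReal.ofReal (‖z - x‖⁻¹ ^ 2) :=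
        Set.indicator_of_mem (Set.mem_setOf.2 ⟨hnear, hfar2⟩) _
      calc ENNReal.ofReal ‖bsInt f x z - bsInt f y z‖
          ≤ ENNReal.ofReal (M * (8 * d * ‖z - x‖⁻¹ ^ 2)) := ENNReal.ofReal_le_ofReal hker
        _ = ENNReal.ofReal M * (ENNReal.ofReal (8 * d) *
            ({z : E2 | 2 * d ≤ ‖z - x‖ ∧ ‖z - x‖ ≤ 2 * R}).indicator
              (fun z => ENNReal.ofReal (‖z - x‖⁻¹ ^ 2)) z) := by
            rw [hind, ← ENNReal.ofReal_mul (by positivity), ← ENNReal.ofReal_mul hM0]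
        _ ≤ _ := le_add_self

lemma biotSavart_diff_le (f : E2 → ℝ) (hf : AEStronglyMeasurable f volume) (R M : ℝ)
    (hM0 : 0 ≤ M) (hsupp : ∀ z, f z ≠ 0 → ‖z‖ < R) (hM : ∀ z, |f z| ≤ M)
    (x y : E2) (hx : ‖x‖ < R) (hy : ‖y‖ < R) (hd0 : 0 < ‖x - y‖) (hdR : ‖x - y‖ ≤ R) :
    ‖biotSavart f x - biotSavart f y‖
      ≤ 13 * sphMeas.toReal * M * ‖x - y‖ * (1 + Real.log (R / ‖x - y‖)) := by
  set d := ‖x - y‖ with hdd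
  set L := Real.log (R / d) with hL
  set s := sphMeas.toReal with hs
  have hR : 0 < R := lt_of_lt_of_le hd0 hdR
  have hs0 : 0 ≤ s := ENNReal.toReal_nonneg
  have hL0 : 0 ≤ L := Real.log_nonneg ((one_le_div hd0).2 hdR)
  have hc1 : Continuous fun z : E2 => ‖z - x‖ := (continuous_id.sub continuous_const).norm
  have hc2 : Continuous fun z : E2 => ‖z - y‖ := (continuous_id.sub continuous_const).norm
  have hs1 : MeasurableSet {z : E2 | ‖z - x‖ < 2 * d} :=
    measurableSet_lt hc1.measurable measurable_const
  have hs2 : MeasurableSet {z : E2 | ‖z - y‖ < 3 * d} :=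
    measurableSet_lt hc2.measurable measurable_const
  have hs3 : MeasurableSet {z : E2 | 2 * d ≤ ‖z - x‖ ∧ ‖z - x‖ ≤ 2 * R} := by
    exact (measurableSet_le measurable_const hc1.measurable).inter
      (measurableSet_le hc1.measurable measurable_const)
  have m1 : Measurable fun z : E2 => ({z : E2 | ‖z - x‖ < 2 * d}).indicator
      (fun z => ENNReal.ofReal ‖z - x‖⁻¹) z :=
    (ENNReal.measurable_ofReal.comp hc1.measurable.inv).indicator hs1
  have m2 : Measurable fun z : E2 => ({z : E2 | ‖z - y‖ < 3 * d}).indicator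
      (fun z => ENNReal.ofReal ‖z - y‖⁻¹) z :=
    (ENNReal.measurable_ofReal.comp hc2.measurable.inv).indicator hs2
  have m3 : Measurable fun z : E2 => ({z : E2 | 2 * d ≤ ‖z - x‖ ∧ ‖z - x‖ ≤ 2 * R}).indicator
      (fun z => ENNReal.ofReal (‖z - x‖⁻¹ ^ 2)) z :=
    (ENNReal.measurable_ofReal.comp ((hc1.measurable.inv).pow_const 2)).indicator hs3
  have hIx := bsInt_integrable f hf R M hM0 hsupp hM x hx
  have hIy := bsInt_integrable f hf R M hM0 hsupp hM y hy
  rw [biotSavart_eq_int, biotSavart_eq_int, ← integral_sub hIx hIy]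
  refine (norm_integral_le_lintegral_norm _).trans ?_
  refine ENNReal.toReal_le_of_le_ofReal (by positivity) ?_
  have hlog : (2 * R) / (2 * d) = R / d := by
    rw [mul_div_mul_left _ _ (two_ne_zero)]
  calc ∫⁻ z, ENNReal.ofReal ‖bsInt f x z - bsInt f y z‖
      ≤ ∫⁻ z, ENNReal.ofReal M *
        (({z : E2 | ‖z - x‖ < 2 * d}).indicator (fun z => ENNReal.ofReal ‖z - x‖⁻¹) z
        + ({z : E2 | ‖z - y‖ < 3 * d}).indicator (fun z => ENNReal.ofReal ‖z - y‖⁻¹) z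
        + ENNReal.ofReal (8 * d) *
          ({z : E2 | 2 * d ≤ ‖z - x‖ ∧ ‖z - x‖ ≤ 2 * R}).indicator
            (fun z => ENNReal.ofReal (‖z - x‖⁻¹ ^ 2)) z) :=
        lintegral_mono (fun z => bsInt_diff_bound f R M hM0 hsupp hM x y hx z)
    _ = ENNReal.ofReal M *
        ((∫⁻ z, ({z : E2 | ‖z - x‖ < 2 * d}).indicator (fun z => ENNReal.ofReal ‖z - x‖⁻¹) z)
        + (∫⁻ z, ({z : E2 | ‖z - y‖ < 3 * d}).indicator (fun z => ENNReal.ofReal ‖z - y‖⁻¹) z)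
        + ENNReal.ofReal (8 * d) *
          ∫⁻ z, ({z : E2 | 2 * d ≤ ‖z - x‖ ∧ ‖z - x‖ ≤ 2 * R}).indicator
            (fun z => ENNReal.ofReal (‖z - x‖⁻¹ ^ 2)) z) := by
        rw [lintegral_const_mul' _ _ ENNReal.ofReal_ne_top,
          lintegral_add_right _ (m3.const_mul _), lintegral_add_right _ m2,
          lintegral_const_mul' _ _ ENNReal.ofReal_ne_top]
    _ ≤ ENNReal.ofReal M * ((sphMeas * ENNReal.ofReal (2 * d)) + (sphMeas * ENNReal.ofReal (3 * d))
        + ENNReal.ofReal (8 * d) * (sphMeas * ENNReal.ofReal L)) := by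
        refine mul_le_mul_right (add_le_add (add_le_add ?_ ?_) (mul_le_mul_right ?_ _)) _
        · exact lintegral_near x (2 * d)
        · exact lintegral_near y (3 * d)
        · have := lintegral_far x (2 * d) (2 * R) (by positivity) (by linarith)
          rwa [hlog] at this
    _ ≤ ENNReal.ofReal (13 * s * M * d * (1 + L)) := by
        rw [← ENNReal.ofReal_toReal sphMeas_ne_top, ← hs,
          ← ENNReal.ofReal_mul hs0, ← ENNReal.ofReal_mul hs0,
          ← ENNReal.ofReal_mul hs0, ← ENNReal.ofReal_mul (by positivity),
          ← ENNReal.ofReal_add (by positivity) (by positivity),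
          ← ENNReal.ofReal_add (by positivity) (by positivity),
          ← ENNReal.ofReal_mul hM0]
        refine ENNReal.ofReal_le_ofReal ?_
        nlinarith [mul_nonneg (mul_nonneg hs0 hM0) hd0.le,
          mul_nonneg (mul_nonneg (mul_nonneg hs0 hM0) hd0.le) hL0]

lemma biotSavart_of_not_meas (f : E2 → ℝ) (hf : ¬ AEStronglyMeasurable f volume) (x : E2) :
    biotSavart f x = 0 := by
  rw [biotSavart_eq_int]
  apply integral_undef
  intro h
  apply hf
  have h1 : AEStronglyMeasurable (bsInt f x) volume := h.aestronglyMeasurable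
  have h2 : AEStronglyMeasurable (fun z => ⟪bsInt f x z, perp (x - z)⟫) volume :=
    h1.inner (Continuous.aestronglyMeasurable
      (continuous_perp.comp (continuous_const.sub continuous_id)))
  have hae : ∀ᵐ z : E2 ∂volume, z ≠ x := by
    have hset : {z : E2 | ¬ z ≠ x} = {x} := by ext z; simp
    rw [ae_iff, hset]
    exact measure_singleton x
  refine h2.congr (hae.mono fun z hz => ?_)
  have hxz : ‖x - z‖ ≠ 0 := norm_ne_zero_iff.2 (sub_ne_zero.2 (Ne.symm hz))
  simp only [bsInt]
  rw [real_inner_smul_left, real_inner_self_eq_norm_sq, norm_perp,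
    div_mul_cancel₀ _ (pow_ne_zero 2 hxz)]

lemma unit_diff (x y : E2) (ρ : ℝ) (hρ : 0 < ρ) (hx : ρ ≤ ‖x‖) (hy : ρ ≤ ‖y‖) :
    ‖‖x‖⁻¹ • x - ‖y‖⁻¹ • y‖ ≤ 2 * ‖x - y‖ / ρ := by
  have hx0 : 0 < ‖x‖ := lt_of_lt_of_le hρ hx
  have hy0 : 0 < ‖y‖ := lt_of_lt_of_le hρ hy
  have hdec : ‖x‖⁻¹ • x - ‖y‖⁻¹ • y = ‖x‖⁻¹ • (x - y) + (‖x‖⁻¹ - ‖y‖⁻¹) • y := by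
    rw [smul_sub, sub_smul]
    abel
  rw [hdec]
  refine (norm_add_le _ _).trans ?_
  rw [norm_smul, norm_smul, Real.norm_eq_abs, Real.norm_eq_abs,
    abs_of_nonneg (by positivity : (0:ℝ) ≤ ‖x‖⁻¹)]
  have key : |‖x‖⁻¹ - ‖y‖⁻¹| * ‖y‖ ≤ ‖x - y‖ / ‖x‖ := by
    rw [inv_sub_inv hx0.ne' hy0.ne', abs_div, abs_of_nonneg (by positivity : (0:ℝ) ≤ ‖x‖ * ‖y‖)]
    have h5 : |‖y‖ - ‖x‖| ≤ ‖x - y‖ := by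
      have := abs_norm_sub_norm_le y x
      rwa [norm_sub_rev y x] at this
    rw [div_mul_eq_mul_div, div_le_div_iff₀ (by positivity) hx0]
    calc |‖y‖ - ‖x‖| * ‖y‖ * ‖x‖ ≤ ‖x - y‖ * ‖y‖ * ‖x‖ := by
          have h6 : (0:ℝ) ≤ ‖y‖ * ‖x‖ := by positivity
          nlinarith
      _ = ‖x - y‖ * (‖x‖ * ‖y‖) := by ring
  have h7 : ‖x‖⁻¹ * ‖x - y‖ + ‖x - y‖ / ‖x‖ = 2 * ‖x - y‖ / ‖x‖ := by
    field_simp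
    ring
  have h8 : 2 * ‖x - y‖ / ‖x‖ ≤ 2 * ‖x - y‖ / ρ := by
    apply div_le_div_of_nonneg_left (by positivity) hρ hx
  linarith

/-- Log-Lipschitz continuity of the radial and angular velocities on the annulus
`Ω = B(0,R) \ B(0,R/K)`, `K > 1`, with constant proportional to `K`. -/
theorem vrad_vang_logLipschitz :
    ∃ C : ℝ, 0 < C ∧
      ∀ (f : EuclideanSpace ℝ (Fin 2) → ℝ) (R K M : ℝ),
        0 < R → 1 < K → 0 ≤ M →
        Function.support f ⊆ Metric.ball 0 R \ Metric.ball 0 (R / K) →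
        (∀ x, |f x| ≤ M) →
        ∀ x y, x ∈ Metric.ball (0 : EuclideanSpace ℝ (Fin 2)) R \ Metric.ball 0 (R / K) →
          y ∈ Metric.ball (0 : EuclideanSpace ℝ (Fin 2)) R \ Metric.ball 0 (R / K) →
          ‖x - y‖ ≤ R →
          |vrad f x - vrad f y| + |vang f x - vang f y| ≤
            C * K * M * ‖x - y‖ * (1 + Real.log (R / ‖x - y‖)) := by
  refine ⟨60 * (sphMeas.toReal + 1), by positivity, ?_⟩
  intro f R K M hR hK hM0 hsupp hM x y hx hy hdR
  set s := sphMeas.toReal with hs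
  have hs0 : 0 ≤ s := ENNReal.toReal_nonneg
  by_cases hxy : x = y
  · subst hxy
    simp
  have hd0 : 0 < ‖x - y‖ := norm_pos_iff.2 (sub_ne_zero.2 hxy)
  set d := ‖x - y‖ with hdd
  set L := Real.log (R / d) with hL
  have hL0 : 0 ≤ L := Real.log_nonneg ((one_le_div hd0).2 hdR)
  have h1L : (1:ℝ) ≤ 1 + L := by linarith
  have hK0 : 0 < K := lt_trans one_pos hK
  have hRK : 0 < R / K := div_pos hR hK0
  simp only [Set.mem_diff, mem_ball, dist_zero_right, not_lt] at hx hy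
  obtain ⟨hxR, hxK⟩ := hx
  obtain ⟨hyR, hyK⟩ := hy
  have hx0 : x ≠ 0 := by
    intro h; rw [h, norm_zero] at hxK; linarith
  have hy0 : y ≠ 0 := by
    intro h; rw [h, norm_zero] at hyK; linarith
  have hsupp' : ∀ z, f z ≠ 0 → ‖z‖ < R := by
    intro z hz
    have := hsupp (Function.mem_support.2 hz)
    simp only [Set.mem_diff, mem_ball, dist_zero_right] at this
    exact this.1
  by_cases hmeas : AEStronglyMeasurable f volume
  · -- main case
    have hV := biotSavart_norm_le f hmeas R M hM0 hsupp' hM x hxR hR.le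
    have hD := biotSavart_diff_le f hmeas R M hM0 hsupp' hM x y hxR hyR hd0 hdR
    rw [← hdd] at hD
    rw [← hL] at hD
    rw [← hs] at hD hV
    have hA := unit_diff x y (R / K) hRK hxK hyK
    have hUy : ‖‖y‖⁻¹ • y‖ = 1 := by
      rw [norm_smul, norm_inv, norm_norm, inv_mul_cancel₀ (norm_ne_zero_iff.2 hy0)]
    have hUyp : ‖‖y‖⁻¹ • perp y‖ = 1 := by
      rw [norm_smul, norm_inv, norm_norm, norm_perp, inv_mul_cancel₀ (norm_ne_zero_iff.2 hy0)]
    have hperp_diff : ‖‖x‖⁻¹ • perp x - ‖y‖⁻¹ • perp y‖ = ‖‖x‖⁻¹ • x - ‖y‖⁻¹ • y‖ := by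
      rw [← perp_smul, ← perp_smul, ← perp_sub, norm_perp]
    have hr1 : vrad f x - vrad f y
        = ⟪‖x‖⁻¹ • x - ‖y‖⁻¹ • y, biotSavart f x⟫
          + ⟪‖y‖⁻¹ • y, biotSavart f x - biotSavart f y⟫ := by
      rw [vrad, vrad, inner_sub_left, inner_sub_right]
      ring
    have hr2 : |vrad f x - vrad f y|
        ≤ ‖‖x‖⁻¹ • x - ‖y‖⁻¹ • y‖ * ‖biotSavart f x‖
          + 1 * ‖biotSavart f x - biotSavart f y‖ := by
      rw [hr1]
      refine (abs_add_le _ _).trans (add_le_add (abs_real_inner_le_norm _ _) ?_)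
      have := abs_real_inner_le_norm (‖y‖⁻¹ • y) (biotSavart f x - biotSavart f y)
      rwa [hUy] at this
    have ha1 : vang f x - vang f y
        = ⟪‖x‖⁻¹ • perp x - ‖y‖⁻¹ • perp y, biotSavart f x⟫
          + ⟪‖y‖⁻¹ • perp y, biotSavart f x - biotSavart f y⟫ := by
      rw [vang, vang, inner_sub_left, inner_sub_right]
      ring
    have ha2 : |vang f x - vang f y|
        ≤ ‖‖x‖⁻¹ • x - ‖y‖⁻¹ • y‖ * ‖biotSavart f x‖
          + 1 * ‖biotSavart f x - biotSavart f y‖ := by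
      rw [ha1]
      refine (abs_add_le _ _).trans (add_le_add ?_ ?_)
      · have := abs_real_inner_le_norm (‖x‖⁻¹ • perp x - ‖y‖⁻¹ • perp y) (biotSavart f x)
        rwa [hperp_diff] at this
      · have := abs_real_inner_le_norm (‖y‖⁻¹ • perp y) (biotSavart f x - biotSavart f y)
        rwa [hUyp] at this
    have hAV : ‖‖x‖⁻¹ • x - ‖y‖⁻¹ • y‖ * ‖biotSavart f x‖ ≤ 4 * K * s * M * d := by
      calc ‖‖x‖⁻¹ • x - ‖y‖⁻¹ • y‖ * ‖biotSavart f x‖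
          ≤ (2 * d / (R / K)) * (M * s * (2 * R)) :=
            mul_le_mul hA hV (norm_nonneg _) (by positivity)
        _ = 4 * K * s * M * d := by
            field_simp
            ring
    have step1 : (0:ℝ) ≤ K * s * M * d * L := by positivity
    have base2 : (0:ℝ) ≤ s * M * d * (1 + L) := mul_nonneg (by positivity) (by linarith)
    have baseK : (0:ℝ) ≤ K * M * d * (1 + L) := mul_nonneg (by positivity) (by linarith)
    have step2 : 26 * (s * M * d) * (1 + L) ≤ 26 * (K * s * M * d) * (1 + L) := by
      have e2 : 26 * (K * s * M * d) * (1 + L) - 26 * (s * M * d) * (1 + L)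
          = 26 * (K - 1) * (s * M * d * (1 + L)) := by ring
      have : (0:ℝ) ≤ 26 * (K - 1) * (s * M * d * (1 + L)) :=
        mul_nonneg (by linarith) base2
      linarith
    have step3 : 34 * (K * s * M * d) * (1 + L) ≤ 60 * (s + 1) * K * M * d * (1 + L) := by
      have e3 : 60 * (s + 1) * K * M * d * (1 + L) - 34 * (K * s * M * d) * (1 + L)
          = (26 * s + 60) * (K * M * d * (1 + L)) := by ring
      have : (0:ℝ) ≤ (26 * s + 60) * (K * M * d * (1 + L)) :=
        mul_nonneg (by linarith) baseK
      linarith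
    linarith [hr2, ha2, hAV, hD, step1, step2, step3]
  · -- non-measurable case
    have hv := biotSavart_of_not_meas f hmeas
    have h1 : vrad f x = 0 := by rw [vrad, hv x, inner_zero_right]
    have h2 : vrad f y = 0 := by rw [vrad, hv y, inner_zero_right]
    have h3 : vang f x = 0 := by rw [vang, hv x, inner_zero_right]
    have h4 : vang f y = 0 := by rw [vang, hv y, inner_zero_right]
    rw [h1, h2, h3, h4, sub_zero, abs_zero, add_zero]
    have : (0:ℝ) ≤ 60 * (s + 1) * K * M * d * (1 + L) := by
      apply mul_nonneg (by positivity)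
      linarith
    linarith
end

section
/- For B ≥ 5 and every integer N ≥ 1, |∫_{−π}^{π} (sin x / (B + 1 − cos x)) sin(Nx) dx| ≤ 2π e^{−N}. -/
open Real

lemma integral_cos_int_mul (m : ℤ) (hm : m ≠ 0) :
    ∫ x in (-π)..π, Real.cos ((m : ℝ) * x) = 0 := by
  have hm' : (m : ℝ) ≠ 0 := Int.cast_ne_zero.mpr hm
  rw [intervalIntegral.integral_comp_mul_left (fun x => Real.cos x) hm', integral_cos]
  have h1 : Real.sin ((m:ℝ) * π) = 0 := Real.sin_int_mul_pi m
  have h2 : Real.sin ((m:ℝ) * (-π)) = 0 := by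
    rw [mul_neg, Real.sin_neg, h1, neg_zero]
  rw [h1, h2, sub_zero, smul_zero]

lemma sin_orth (n N : ℕ) (hn : 1 ≤ n) (hN : 1 ≤ N) :
    ∫ x in (-π)..π, Real.sin ((n:ℝ) * x) * Real.sin ((N:ℝ) * x)
      = if n = N then π else 0 := by
  have key : ∀ x : ℝ, Real.sin ((n:ℝ) * x) * Real.sin ((N:ℝ) * x)
      = (Real.cos (((n:ℝ) - N) * x) - Real.cos (((n:ℝ) + N) * x)) / 2 := by
    intro x
    rw [sub_mul, add_mul, Real.cos_sub, Real.cos_add]; ring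
  simp only [key]
  have i1 : IntervalIntegrable (fun x => Real.cos (((n:ℝ) - N) * x)) MeasureTheory.volume (-π) π :=
    (Real.continuous_cos.comp (continuous_const.mul continuous_id)).intervalIntegrable _ _
  have i2 : IntervalIntegrable (fun x => Real.cos (((n:ℝ) + N) * x)) MeasureTheory.volume (-π) π :=
    (Real.continuous_cos.comp (continuous_const.mul continuous_id)).intervalIntegrable _ _
  rw [intervalIntegral.integral_div, intervalIntegral.integral_sub i1 i2]
  have hsum : ∫ x in (-π)..π, Real.cos (((n:ℝ) + N) * x) = 0 := by
    have : ((n:ℝ) + N) = ((n + N : ℤ) : ℝ) := by push_cast; ring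
    rw [this]
    exact integral_cos_int_mul _ (by omega)
  by_cases h : n = N
  · subst h
    have : ((n:ℝ) - n) = 0 := by ring
    rw [if_pos rfl, this, hsum]
    simp [two_mul]
  · have : ((n:ℝ) - N) = ((n - N : ℤ) : ℝ) := by push_cast; ring
    rw [if_neg h, this, hsum, integral_cos_int_mul _ (by omega)]
    ring

lemma telescope_sum (a r : ℝ) (hr : r^2 + 1 = 2*a*r) (x : ℝ) (M : ℕ) :
    (∑ n ∈ Finset.range M, 2 * r^(n+1) * Real.sin (((n:ℝ)+1) * x)) * (a - Real.cos x)
      = Real.sin x + r^(M+1) * Real.sin ((M:ℝ)*x) - r^M * Real.sin (((M:ℝ)+1)*x) := by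
  induction M with
  | zero => simp
  | succ M ih =>
    rw [Finset.sum_range_succ, add_mul]
    push_cast
    have e1 : ((M:ℝ)+1+1)*x = ((M:ℝ)+1)*x + x := by ring
    have e2 : (M:ℝ)*x = ((M:ℝ)+1)*x - x := by ring
    rw [e1, Real.sin_add]
    rw [e2, Real.sin_sub] at ih
    linear_combination ih - r^M * Real.sin (((M:ℝ)+1)*x) * hr

set_option maxHeartbeats 1600000 in
/-- For `B ≥ 5` and `N ≥ 1`,
`|∫_{−π}^{π} (sin x / (B + 1 − cos x)) sin(Nx) dx| ≤ 2π e^{−N}`. -/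
theorem oscillatory_integral_sin_decay (B : ℝ) (hB : 5 ≤ B) (N : ℕ) (hN : 1 ≤ N) :
    |∫ x in (-π)..π, (Real.sin x / (B + 1 - Real.cos x)) * Real.sin (N * x)| ≤
      2 * π * Real.exp (-(N : ℝ)) := by
  obtain ⟨a, ha_def⟩ : ∃ a : ℝ, a = B + 1 := ⟨_, rfl⟩
  rw [show B + 1 = a from ha_def.symm]
  have ha : 6 ≤ a := by rw [ha_def]; linarith
  have hden : ∀ x : ℝ, 5 ≤ a - Real.cos x := fun x => by
    have := Real.cos_le_one x; linarith
  have hdpos : ∀ x : ℝ, 0 < a - Real.cos x := fun x =>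
    lt_of_lt_of_le (by norm_num) (hden x)
  have hsq : (35:ℝ) ≤ a^2 - 1 := by nlinarith
  obtain ⟨s, hs_def⟩ : ∃ s : ℝ, s = Real.sqrt (a^2-1) := ⟨_, rfl⟩
  have hs_nn : 0 ≤ s := hs_def ▸ Real.sqrt_nonneg _
  have hs2 : s^2 = a^2 - 1 := hs_def ▸ Real.sq_sqrt (by linarith)
  obtain ⟨r, hr_def⟩ : ∃ r : ℝ, r = a - s := ⟨_, rfl⟩
  have hprod : r * (a + s) = 1 := by rw [hr_def]; linear_combination -hs2
  have hs_ge : (5.9:ℝ) ≤ s := by nlinarith [hs2, hs_nn]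
  have hr_pos : 0 < r := by nlinarith [hprod]
  have hr_small : r ≤ 0.085 := by nlinarith [hprod, hr_pos]
  have hr_id : r^2 + 1 = 2*a*r := by rw [hr_def]; linear_combination hs2
  have hrN_pos : 0 < r^N := pow_pos hr_pos N
  -- decomposition
  have hdecomp : ∀ x : ℝ, Real.sin x / (a - Real.cos x) * Real.sin ((N:ℝ)*x)
      = (∑ n ∈ Finset.range N, 2 * r^(n+1) * (Real.sin (((n:ℝ)+1)*x) * Real.sin ((N:ℝ)*x)))
        + ((r^N * Real.sin (((N:ℝ)+1)*x) - r^(N+1) * Real.sin ((N:ℝ)*x)) / (a - Real.cos x))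
            * Real.sin ((N:ℝ)*x) := by
    intro x
    have ht := telescope_sum a r hr_id x N
    have hne : a - Real.cos x ≠ 0 := ne_of_gt (hdpos x)
    have key : Real.sin x / (a - Real.cos x)
        = (∑ n ∈ Finset.range N, 2 * r^(n+1) * Real.sin (((n:ℝ)+1)*x))
          + (r^N * Real.sin (((N:ℝ)+1)*x) - r^(N+1) * Real.sin ((N:ℝ)*x)) / (a - Real.cos x) := by
      field_simp
      rw [mul_comm x (N:ℝ), mul_comm x ((N:ℝ)+1)]
      linear_combination -ht
    rw [key, add_mul, Finset.sum_mul]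
    congr 1
    apply Finset.sum_congr rfl
    intro n _
    ring
  -- integrability
  have hgi : ∀ n ∈ Finset.range N, IntervalIntegrable
      (fun x => 2 * r^(n+1) * (Real.sin (((n:ℝ)+1)*x) * Real.sin ((N:ℝ)*x)))
      MeasureTheory.volume (-π) π := by
    intro n _
    exact (Continuous.intervalIntegrable (by fun_prop) _ _)
  have hgint : IntervalIntegrable
      (fun x => ∑ n ∈ Finset.range N, 2 * r^(n+1) * (Real.sin (((n:ℝ)+1)*x) * Real.sin ((N:ℝ)*x)))
      MeasureTheory.volume (-π) π := by
    exact (Continuous.intervalIntegrable (continuous_finset_sum _ (fun n _ => by fun_prop)) _ _)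
  have hcont_h : Continuous (fun x =>
      ((r^N * Real.sin (((N:ℝ)+1)*x) - r^(N+1) * Real.sin ((N:ℝ)*x)) / (a - Real.cos x))
        * Real.sin ((N:ℝ)*x)) := by
    apply Continuous.mul
    · exact Continuous.div (by fun_prop) (by fun_prop) (fun x => ne_of_gt (hdpos x))
    · fun_prop
  have hhint : IntervalIntegrable (fun x =>
      ((r^N * Real.sin (((N:ℝ)+1)*x) - r^(N+1) * Real.sin ((N:ℝ)*x)) / (a - Real.cos x))
        * Real.sin ((N:ℝ)*x)) MeasureTheory.volume (-π) π :=
    hcont_h.intervalIntegrable _ _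
  -- split the integral
  have hI : (∫ x in (-π)..π, Real.sin x / (a - Real.cos x) * Real.sin ((N:ℝ)*x))
      = (∫ x in (-π)..π, ∑ n ∈ Finset.range N,
          2 * r^(n+1) * (Real.sin (((n:ℝ)+1)*x) * Real.sin ((N:ℝ)*x)))
        + ∫ x in (-π)..π,
            ((r^N * Real.sin (((N:ℝ)+1)*x) - r^(N+1) * Real.sin ((N:ℝ)*x)) / (a - Real.cos x))
              * Real.sin ((N:ℝ)*x) := by
    rw [← intervalIntegral.integral_add hgint hhint]
    exact intervalIntegral.integral_congr (fun x _ => hdecomp x)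
  -- value of the main term
  have hg_val : (∫ x in (-π)..π, ∑ n ∈ Finset.range N,
      2 * r^(n+1) * (Real.sin (((n:ℝ)+1)*x) * Real.sin ((N:ℝ)*x))) = 2 * r^N * π := by
    rw [intervalIntegral.integral_finset_sum hgi]
    have hterm : ∀ n ∈ Finset.range N,
        (∫ x in (-π)..π, 2 * r^(n+1) * (Real.sin (((n:ℝ)+1)*x) * Real.sin ((N:ℝ)*x)))
          = 2 * r^(n+1) * (if n+1 = N then π else 0) := by
      intro n _
      rw [intervalIntegral.integral_const_mul]
      congr 1
      have hc : ((n:ℝ)+1) = ((n+1 : ℕ) : ℝ) := by push_cast; ring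
      simp_rw [hc]
      exact sin_orth (n+1) N (by omega) hN
    rw [Finset.sum_congr rfl hterm]
    rw [Finset.sum_eq_single (N-1)]
    · have : N - 1 + 1 = N := by omega
      rw [this, if_pos rfl]
    · intro n hn hne
      have : ¬ (n + 1 = N) := by
        intro h; apply hne; omega
      rw [if_neg this, mul_zero]
    · intro h
      exact absurd (Finset.mem_range.mpr (by omega)) h
  -- bound on the remainder
  have hb : ∀ x ∈ Set.uIoc (-π) π,
      ‖((r^N * Real.sin (((N:ℝ)+1)*x) - r^(N+1) * Real.sin ((N:ℝ)*x)) / (a - Real.cos x))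
        * Real.sin ((N:ℝ)*x)‖ ≤ (r^N + r^(N+1)) / 5 := by
    intro x _
    rw [Real.norm_eq_abs, abs_mul, abs_div, abs_of_pos (hdpos x)]
    have h1 : |Real.sin ((N:ℝ)*x)| ≤ 1 := Real.abs_sin_le_one _
    have h2 : |Real.sin (((N:ℝ)+1)*x)| ≤ 1 := Real.abs_sin_le_one _
    have hnum : |r^N * Real.sin (((N:ℝ)+1)*x) - r^(N+1) * Real.sin ((N:ℝ)*x)|
        ≤ r^N + r^(N+1) := by
      refine (abs_sub _ _).trans ?_
      rw [abs_mul, abs_mul, abs_pow, abs_pow, abs_of_pos hr_pos]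
      have hp1 : 0 < r^(N+1) := pow_pos hr_pos _
      nlinarith [abs_nonneg (Real.sin (((N:ℝ)+1)*x)), abs_nonneg (Real.sin ((N:ℝ)*x))]
    calc |r^N * Real.sin (((N:ℝ)+1)*x) - r^(N+1) * Real.sin ((N:ℝ)*x)| / (a - Real.cos x)
          * |Real.sin ((N:ℝ)*x)|
        ≤ (r^N + r^(N+1)) / 5 * 1 := by
          apply mul_le_mul _ h1 (abs_nonneg _) (by positivity)
          exact div_le_div₀ (by positivity) hnum (by norm_num) (hden x)
      _ = (r^N + r^(N+1)) / 5 := mul_one _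
  have hrem : ‖∫ x in (-π)..π,
      ((r^N * Real.sin (((N:ℝ)+1)*x) - r^(N+1) * Real.sin ((N:ℝ)*x)) / (a - Real.cos x))
        * Real.sin ((N:ℝ)*x)‖ ≤ (r^N + r^(N+1)) / 5 * |π - (-π)| :=
    intervalIntegral.norm_integral_le_of_norm_le_const hb
  -- put it together
  rw [hI, hg_val]
  have hE : 0 < Real.exp (-(N:ℝ)) := Real.exp_pos _
  have habs2 : |π - (-π)| = 2*π := by
    have h : π - (-π) = 2*π := by ring
    rw [h, abs_of_pos (by positivity)]
  rw [Real.norm_eq_abs, habs2] at hrem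
  have step : |2 * r^N * π + ∫ x in (-π)..π,
      ((r^N * Real.sin (((N:ℝ)+1)*x) - r^(N+1) * Real.sin ((N:ℝ)*x)) / (a - Real.cos x))
        * Real.sin ((N:ℝ)*x)|
      ≤ 2 * r^N * π + (r^N + r^(N+1)) / 5 * (2*π) := by
    refine (abs_add_le _ _).trans ?_
    have : |2 * r^N * π| = 2 * r^N * π := abs_of_pos (by positivity)
    rw [this]
    linarith [hrem]
  refine step.trans ?_
  -- numeric estimate
  have hexp : Real.exp (-(N:ℝ)) = (Real.exp (-1))^N := by
    rw [← Real.exp_nat_mul]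
    congr 1
    push_cast; ring
  have hkey : Real.exp (-1) * Real.exp 1 = 1 := by rw [← Real.exp_add]; norm_num
  have he : (0.36:ℝ) ≤ Real.exp (-1) := by
    nlinarith [hkey, Real.exp_one_lt_d9, (Real.exp_pos (-1)).le, Real.exp_pos 1]
  have hre : r ≤ 0.24 * Real.exp (-1) := by nlinarith [he]
  have h1 : r^N ≤ (0.24 * Real.exp (-1))^N := pow_le_pow_left₀ hr_pos.le hre N
  have h2 : ((0.24:ℝ) * Real.exp (-1))^N = 0.24^N * Real.exp (-(N:ℝ)) := by
    rw [mul_pow, ← hexp]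
  have h3 : (0.24:ℝ)^N ≤ 0.24 := by
    calc (0.24:ℝ)^N ≤ 0.24^1 := pow_le_pow_of_le_one (by norm_num) (by norm_num) hN
      _ = 0.24 := pow_one _
  have hRE : r^N ≤ 0.24 * Real.exp (-(N:ℝ)) := by
    calc r^N ≤ 0.24^N * Real.exp (-(N:ℝ)) := h2 ▸ h1
      _ ≤ 0.24 * Real.exp (-(N:ℝ)) := mul_le_mul_of_nonneg_right h3 hE.le
  have A1 : π * r^N ≤ π * (0.24 * Real.exp (-(N:ℝ))) :=
    mul_le_mul_of_nonneg_left hRE Real.pi_pos.le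
  have A2 : π * (r^N * r) ≤ π * ((0.24 * Real.exp (-(N:ℝ))) * 0.085) :=
    mul_le_mul_of_nonneg_left
      (mul_le_mul hRE hr_small hr_pos.le (by positivity)) Real.pi_pos.le
  have A3 : 0 < π * Real.exp (-(N:ℝ)) := mul_pos Real.pi_pos hE
  rw [pow_succ]
  nlinarith [A1, A2, A3]
end
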